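/- With the allocation construction c₁, c₂ as above: if rᵀf* ≠ 0, then ‖c₁(r,f*)‖² = ‖c₂(r,f*)‖² = −|rᵀf*|/(4‖r‖) + 3Φ₁(r,f*)/(4‖r‖); and if rᵀf* = 0, then ‖c₁(r,f*)‖² = 2‖c₂(r,f*)‖² = Φ₁(r,f*)/‖r‖. In compact form, ‖c₁(r,f*)‖² = (2 − sgn(rᵀf*)²)‖c₂(r,f*)‖². -/

import Mathlib

open Matrix

noncomputable section

def norm3 (r : Fin 3 → ℝ) : ℝ := Real.sqrt (r ⬝ᵥ r)

def Phi1 (r f : Fin 3 → ℝ) : ℝ :=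
  Real.sqrt (norm3 (crossProduct r f) ^ 2 + norm3 r ^ 2 * norm3 f ^ 2)

def Phi2 (r f : Fin 3 → ℝ) : ℝ := (2 - Real.sign (r ⬝ᵥ f) ^ 2) * Phi1 r f

def aX (r f : Fin 3 → ℝ) : ℝ :=
  -(Real.sign (r ⬝ᵥ f) / 2) * Real.sqrt ((|r ⬝ᵥ f| + Phi1 r f) / norm3 r)

def aY (r f : Fin 3 → ℝ) : ℝ :=
  (1 / Real.sqrt 2) * Real.sqrt ((-|r ⬝ᵥ f| + Phi2 r f) / norm3 r)

def bX (r f : Fin 3 → ℝ) : ℝ :=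
  (1 / 2) * Real.sqrt ((|r ⬝ᵥ f| + Phi2 r f) / norm3 r)

def bY (r f : Fin 3 → ℝ) : ℝ :=
  -(Real.sign (r ⬝ᵥ f) / Real.sqrt 2) * Real.sqrt ((-|r ⬝ᵥ f| + Phi1 r f) / norm3 r)

open Classical in
def Rmat (r f : Fin 3 → ℝ) : Matrix (Fin 3) (Fin 3) ℝ :=
  if crossProduct r f ≠ 0 then
    Matrix.of ![ (1 / norm3 r) • r,
      (1 / (norm3 r * norm3 (crossProduct r f))) • ((r ⬝ᵥ r) • f - (r ⬝ᵥ f) • r),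
      (1 / norm3 (crossProduct r f)) • (crossProduct r f) ]
  else
    Matrix.of ![ (1 / norm3 r) • r, 0, 0 ]

def c1 (r f : Fin 3 → ℝ) : Fin 3 → ℝ := (Rmat r f)ᵀ.mulVec ![aX r f, aY r f, 0]

def c2 (r f : Fin 3 → ℝ) : Fin 3 → ℝ := (Rmat r f)ᵀ.mulVec ![bX r f, bY r f, 0]

def f3 (r u v : Fin 3 → ℝ) : Fin 3 → ℝ :=
  ((v ⬝ᵥ r) / norm3 r) • u + ((u ⬝ᵥ r) / norm3 r) • v + ((u ⬝ᵥ v) / norm3 r) • r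
    - (5 * (u ⬝ᵥ r) * (v ⬝ᵥ r) / norm3 r ^ 3) • r

end

/-! When `r ⨯₃ f ≠ 0` the first two rows of `Rmat r f` are orthonormal, so `‖c₁‖² = a_x² + a_y²`
and `‖c₂‖² = b_x² + b_y²`. When `r ⨯₃ f = 0` the second row vanishes, but then Lagrange's identity
`Φ₁² = 2‖r ⨯₃ f‖² + (rᵀf)²` gives `Φ₁ = Φ₂ = |rᵀf|`, which kills `a_y` and `b_y`, so the same
formulas hold. The squared coordinates are explicit in `sgn(rᵀf)²`, `|rᵀf|` and `Φ₁`, and the two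
cases `sgn(rᵀf)² = 1` and `rᵀf = 0` are direct computations. -/

section Orthogonal

variable {n : Type*} [Fintype n]

lemma dotProduct_self_nonneg (v : n → ℝ) : 0 ≤ v ⬝ᵥ v :=
  Finset.sum_nonneg fun i _ => mul_self_nonneg (v i)

lemma dotProduct_self_add_smul_of_orthogonal {u w : n → ℝ} (h : u ⬝ᵥ w = 0) (a b : ℝ) :
    (a • u + b • w) ⬝ᵥ (a • u + b • w) = a ^ 2 * (u ⬝ᵥ u) + b ^ 2 * (w ⬝ᵥ w) := by
  simp only [add_dotProduct, dotProduct_add, smul_dotProduct, dotProduct_smul, smul_eq_mul,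
    dotProduct_comm w u, h]
  ring

end Orthogonal

lemma norm3_sq (x : Fin 3 → ℝ) : norm3 x ^ 2 = x ⬝ᵥ x :=
  Real.sq_sqrt (dotProduct_self_nonneg x)

lemma norm3_nonneg (x : Fin 3 → ℝ) : 0 ≤ norm3 x :=
  Real.sqrt_nonneg _

lemma norm3_ne_zero {x : Fin 3 → ℝ} (hx : x ≠ 0) : norm3 x ≠ 0 := by
  rw [norm3, Real.sqrt_ne_zero (dotProduct_self_nonneg x)]
  exact mt dotProduct_self_eq_zero.mp hx

lemma dotProduct_self_smul_inv_norm3 {x : Fin 3 → ℝ} (hx : x ≠ 0) :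
    ((1 / norm3 x) • x) ⬝ᵥ ((1 / norm3 x) • x) = 1 := by
  rw [smul_dotProduct, dotProduct_smul, ← norm3_sq, smul_eq_mul, smul_eq_mul]
  field_simp [norm3_ne_zero hx]

section Rmat

variable {r f : Fin 3 → ℝ}

lemma Rmat_transpose_mulVec (a b : ℝ) :
    (Rmat r f)ᵀ *ᵥ ![a, b, 0] = a • Rmat r f 0 + b • Rmat r f 1 := by
  simp [mulVec_transpose, vecMul_eq_sum, Fin.sum_univ_three]

lemma Rmat_zero : Rmat r f 0 = (1 / norm3 r) • r := by
  unfold Rmat; split_ifs <;> rfl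

lemma Rmat_one_of_cross_ne_zero (hc : r ⨯₃ f ≠ 0) :
    Rmat r f 1 = (1 / (norm3 r * norm3 (r ⨯₃ f))) • (r ⨯₃ (f ⨯₃ r)) := by
  rw [Rmat, if_pos hc, cross_cross_eq_smul_sub_smul', dotProduct_comm f r]
  rfl

lemma Rmat_one_of_cross_eq_zero (hc : r ⨯₃ f = 0) : Rmat r f 1 = 0 := by
  rw [Rmat, if_neg (not_not_intro hc)]
  rfl

lemma Rmat_zero_dotProduct_one : Rmat r f 0 ⬝ᵥ Rmat r f 1 = 0 := by
  by_cases hc : r ⨯₃ f = 0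
  · simp [Rmat_one_of_cross_eq_zero hc]
  · simp [Rmat_zero, Rmat_one_of_cross_ne_zero hc, dot_self_cross]

lemma Rmat_one_dotProduct_self_of_cross_ne_zero (hc : r ⨯₃ f ≠ 0) :
    Rmat r f 1 ⬝ᵥ Rmat r f 1 = 1 := by
  have hr : r ≠ 0 := by rintro rfl; simp at hc
  have hw : r ⨯₃ (f ⨯₃ r) ⬝ᵥ r ⨯₃ (f ⨯₃ r) = norm3 r ^ 2 * norm3 (r ⨯₃ f) ^ 2 := by
    rw [cross_dot_cross, dot_cross_self, zero_mul, sub_zero, ← cross_anticomm r f, neg_dotProduct,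
      dotProduct_neg, neg_neg, norm3_sq, norm3_sq]
  rw [Rmat_one_of_cross_ne_zero hc, smul_dotProduct, dotProduct_smul, hw, smul_eq_mul,
    smul_eq_mul]
  field_simp [norm3_ne_zero hr, norm3_ne_zero hc]

lemma norm3_sq_Rmat_transpose_mulVec (hr : r ≠ 0) {a b : ℝ} (hb : r ⨯₃ f = 0 → b = 0) :
    norm3 ((Rmat r f)ᵀ *ᵥ ![a, b, 0]) ^ 2 = a ^ 2 + b ^ 2 := by
  have hb' : b ^ 2 * (Rmat r f 1 ⬝ᵥ Rmat r f 1) = b ^ 2 := by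
    by_cases hc : r ⨯₃ f = 0
    · simp [hb hc]
    · rw [Rmat_one_dotProduct_self_of_cross_ne_zero hc, mul_one]
  rw [norm3_sq, Rmat_transpose_mulVec, dotProduct_self_add_smul_of_orthogonal
    Rmat_zero_dotProduct_one, hb', Rmat_zero, dotProduct_self_smul_inv_norm3 hr, mul_one]

end Rmat

lemma Real.sign_sq_of_ne_zero {x : ℝ} (hx : x ≠ 0) : Real.sign x ^ 2 = 1 := by
  rcases Real.sign_apply_eq_of_ne_zero x hx with h | h <;> norm_num [h]

section Phi

variable {r f : Fin 3 → ℝ}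

lemma Phi1_eq_sqrt (r f : Fin 3 → ℝ) :
    Phi1 r f = √(2 * norm3 (r ⨯₃ f) ^ 2 + (r ⬝ᵥ f) ^ 2) := by
  rw [Phi1]
  congr 1
  rw [norm3_sq, norm3_sq, norm3_sq, cross_dot_cross, dotProduct_comm f r]
  ring

lemma abs_dotProduct_le_Phi1 (r f : Fin 3 → ℝ) : |r ⬝ᵥ f| ≤ Phi1 r f := by
  rw [Phi1_eq_sqrt, ← Real.sqrt_sq_eq_abs]
  exact Real.sqrt_le_sqrt (le_add_of_nonneg_left (by positivity))

lemma Phi1_eq_abs_of_cross_eq_zero (hc : r ⨯₃ f = 0) : Phi1 r f = |r ⬝ᵥ f| := by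
  simp [Phi1_eq_sqrt, hc, norm3, Real.sqrt_sq_eq_abs]

lemma Phi2_eq_Phi1_of_dotProduct_ne_zero (hd : r ⬝ᵥ f ≠ 0) : Phi2 r f = Phi1 r f := by
  rw [Phi2, Real.sign_sq_of_ne_zero hd]
  norm_num

lemma Phi2_eq_two_mul_Phi1_of_dotProduct_eq_zero (hd : r ⬝ᵥ f = 0) :
    Phi2 r f = 2 * Phi1 r f := by
  simp [Phi2, hd]

lemma abs_dotProduct_le_Phi2 (r f : Fin 3 → ℝ) : |r ⬝ᵥ f| ≤ Phi2 r f := by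
  rcases eq_or_ne (r ⬝ᵥ f) 0 with hd | hd
  · rw [Phi2_eq_two_mul_Phi1_of_dotProduct_eq_zero hd, hd, abs_zero]
    exact mul_nonneg zero_le_two (Real.sqrt_nonneg _)
  · exact Phi2_eq_Phi1_of_dotProduct_ne_zero hd ▸ abs_dotProduct_le_Phi1 r f

lemma Phi2_eq_abs_of_cross_eq_zero (hc : r ⨯₃ f = 0) : Phi2 r f = |r ⬝ᵥ f| := by
  rcases eq_or_ne (r ⬝ᵥ f) 0 with hd | hd
  · rw [Phi2_eq_two_mul_Phi1_of_dotProduct_eq_zero hd, Phi1_eq_abs_of_cross_eq_zero hc, hd,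
      abs_zero, mul_zero]
  · rw [Phi2_eq_Phi1_of_dotProduct_ne_zero hd, Phi1_eq_abs_of_cross_eq_zero hc]

end Phi

section Coordinates

variable (r f : Fin 3 → ℝ)

lemma aX_sq : aX r f ^ 2 = Real.sign (r ⬝ᵥ f) ^ 2 / 4 * ((|r ⬝ᵥ f| + Phi1 r f) / norm3 r) := by
  have h : 0 ≤ (|r ⬝ᵥ f| + Phi1 r f) / norm3 r :=
    div_nonneg (add_nonneg (abs_nonneg _) (Real.sqrt_nonneg _)) (norm3_nonneg r)
  rw [aX, mul_pow, Real.sq_sqrt h]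
  ring

lemma aY_sq : aY r f ^ 2 = 1 / 2 * ((-|r ⬝ᵥ f| + Phi2 r f) / norm3 r) := by
  have h : 0 ≤ (-|r ⬝ᵥ f| + Phi2 r f) / norm3 r :=
    div_nonneg (by linarith [abs_dotProduct_le_Phi2 r f]) (norm3_nonneg r)
  rw [aY, mul_pow, Real.sq_sqrt h, div_pow, Real.sq_sqrt zero_le_two, one_pow]

lemma bX_sq : bX r f ^ 2 = 1 / 4 * ((|r ⬝ᵥ f| + Phi2 r f) / norm3 r) := by
  have h : 0 ≤ (|r ⬝ᵥ f| + Phi2 r f) / norm3 r :=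
    div_nonneg (by linarith [abs_dotProduct_le_Phi2 r f, abs_nonneg (r ⬝ᵥ f)]) (norm3_nonneg r)
  rw [bX, mul_pow, Real.sq_sqrt h]
  ring

lemma bY_sq :
    bY r f ^ 2 = Real.sign (r ⬝ᵥ f) ^ 2 / 2 * ((-|r ⬝ᵥ f| + Phi1 r f) / norm3 r) := by
  have h : 0 ≤ (-|r ⬝ᵥ f| + Phi1 r f) / norm3 r :=
    div_nonneg (by linarith [abs_dotProduct_le_Phi1 r f]) (norm3_nonneg r)
  rw [bY, mul_pow, Real.sq_sqrt h, neg_sq, div_pow, Real.sq_sqrt zero_le_two]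

variable {r f}

lemma aY_eq_zero_of_cross_eq_zero (hc : r ⨯₃ f = 0) : aY r f = 0 := by
  simp [aY, Phi2_eq_abs_of_cross_eq_zero hc]

lemma bY_eq_zero_of_cross_eq_zero (hc : r ⨯₃ f = 0) : bY r f = 0 := by
  simp [bY, Phi1_eq_abs_of_cross_eq_zero hc]

end Coordinates

section Allocation

variable {r f : Fin 3 → ℝ}

lemma norm3_c1_sq (hr : r ≠ 0) : norm3 (c1 r f) ^ 2 = aX r f ^ 2 + aY r f ^ 2 :=
  norm3_sq_Rmat_transpose_mulVec hr aY_eq_zero_of_cross_eq_zero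

lemma norm3_c2_sq (hr : r ≠ 0) : norm3 (c2 r f) ^ 2 = bX r f ^ 2 + bY r f ^ 2 :=
  norm3_sq_Rmat_transpose_mulVec hr bY_eq_zero_of_cross_eq_zero

lemma norm3_c1_sq_of_dotProduct_ne_zero (hr : r ≠ 0) (hd : r ⬝ᵥ f ≠ 0) :
    norm3 (c1 r f) ^ 2 = -|r ⬝ᵥ f| / (4 * norm3 r) + 3 * Phi1 r f / (4 * norm3 r) := by
  rw [norm3_c1_sq hr, aX_sq, aY_sq, Phi2_eq_Phi1_of_dotProduct_ne_zero hd,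
    Real.sign_sq_of_ne_zero hd]
  ring

lemma norm3_c2_sq_of_dotProduct_ne_zero (hr : r ≠ 0) (hd : r ⬝ᵥ f ≠ 0) :
    norm3 (c2 r f) ^ 2 = -|r ⬝ᵥ f| / (4 * norm3 r) + 3 * Phi1 r f / (4 * norm3 r) := by
  rw [norm3_c2_sq hr, bX_sq, bY_sq, Phi2_eq_Phi1_of_dotProduct_ne_zero hd,
    Real.sign_sq_of_ne_zero hd]
  ring

lemma norm3_c1_sq_of_dotProduct_eq_zero (hr : r ≠ 0) (hd : r ⬝ᵥ f = 0) :
    norm3 (c1 r f) ^ 2 = Phi1 r f / norm3 r := by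
  rw [norm3_c1_sq hr, aX_sq, aY_sq, Phi2_eq_two_mul_Phi1_of_dotProduct_eq_zero hd, hd,
    Real.sign_zero, abs_zero]
  ring

lemma norm3_c2_sq_of_dotProduct_eq_zero (hr : r ≠ 0) (hd : r ⬝ᵥ f = 0) :
    norm3 (c2 r f) ^ 2 = Phi1 r f / (2 * norm3 r) := by
  rw [norm3_c2_sq hr, bX_sq, bY_sq, Phi2_eq_two_mul_Phi1_of_dotProduct_eq_zero hd, hd,
    Real.sign_zero, abs_zero]
  ring

end Allocation

theorem allocation_norms (r f : Fin 3 → ℝ) (hr : r ≠ 0) :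
    (r ⬝ᵥ f ≠ 0 →
      norm3 (c1 r f) ^ 2 = norm3 (c2 r f) ^ 2 ∧
      norm3 (c1 r f) ^ 2 = -|r ⬝ᵥ f| / (4 * norm3 r) + 3 * Phi1 r f / (4 * norm3 r)) ∧
    (r ⬝ᵥ f = 0 →
      norm3 (c1 r f) ^ 2 = 2 * norm3 (c2 r f) ^ 2 ∧
      norm3 (c1 r f) ^ 2 = Phi1 r f / norm3 r) ∧
    norm3 (c1 r f) ^ 2 = (2 - Real.sign (r ⬝ᵥ f) ^ 2) * norm3 (c2 r f) ^ 2 := by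
  have c1_eq_c2 (hd : r ⬝ᵥ f ≠ 0) : norm3 (c1 r f) ^ 2 = norm3 (c2 r f) ^ 2 := by
    rw [norm3_c1_sq_of_dotProduct_ne_zero hr hd, norm3_c2_sq_of_dotProduct_ne_zero hr hd]
  have c1_eq_two_c2 (hd : r ⬝ᵥ f = 0) : norm3 (c1 r f) ^ 2 = 2 * norm3 (c2 r f) ^ 2 := by
    rw [norm3_c1_sq_of_dotProduct_eq_zero hr hd, norm3_c2_sq_of_dotProduct_eq_zero hr hd]
    ring
  refine ⟨fun hd => ⟨c1_eq_c2 hd, norm3_c1_sq_of_dotProduct_ne_zero hr hd⟩,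
    fun hd => ⟨c1_eq_two_c2 hd, norm3_c1_sq_of_dotProduct_eq_zero hr hd⟩, ?_⟩
  rcases eq_or_ne (r ⬝ᵥ f) 0 with hd | hd
  · rw [c1_eq_two_c2 hd, hd, Real.sign_zero]
    ring
  · rw [c1_eq_c2 hd, Real.sign_sq_of_ne_zero hd]
    ring
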